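/- arXiv:1606.08397 — 3 statements merged into one kernel-verified Lean document; each statement's English description precedes it below -/
import Mathlib

section
/- (Thirring system in hyperbolic coordinates.) Let (u,v) be a C¹ solution of the Thirring system on the cone {(t,x) : t > |x|}, and define U(ρ,y) = (ρ e^{−y})^{1/2} u(ρ cosh y, ρ sinh y), V(ρ,y) = (ρ e^{y})^{1/2} v(ρ cosh y, ρ sinh y). Then for all ρ > 0 and y ∈ ℝ: ∂_ρ U + ρ^{−1} ∂_y U = i V + i ρ^{−1} |V|² U and ∂_ρ V − ρ^{−1} ∂_y V = i U + i ρ^{−1} |U|² V. -/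
/-!
By the chain rule, in hyperbolic coordinates `∂_ρ + ρ⁻¹ ∂_y = e^y (∂_t + ∂_x)` and
`∂_ρ - ρ⁻¹ ∂_y = e^{-y} (∂_t - ∂_x)`, while the weights `√(ρ e^{-y})` and `√(ρ e^y)` are
annihilated by `∂_ρ + ρ⁻¹ ∂_y` and `∂_ρ - ρ⁻¹ ∂_y` respectively. Hence
`(∂_ρ + ρ⁻¹ ∂_y) U = √(ρ e^{-y}) e^y (∂_t + ∂_x) u = √(ρ e^y) (∂_t + ∂_x) u`, and similarly for `V`;
the Thirring system then gives the claim because `|V|² = ρ e^y |v|²` and `|U|² = ρ e^{-y} |u|²`.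
-/

noncomputable section

/-- Partial derivative in the first variable. -/
def pt (u : ℝ → ℝ → ℂ) : ℝ → ℝ → ℂ := fun t x => deriv (fun s => u s x) t
/-- Partial derivative in the second variable. -/
def px (u : ℝ → ℝ → ℂ) : ℝ → ℝ → ℂ := fun t x => deriv (fun y => u t y) x

section

open Real

variable {f : ℝ → ℝ → ℂ}

theorem HasFDerivAt.hasDerivAt_comp_prodMk {L : ℝ × ℝ →L[ℝ] ℂ} {γ₁ γ₂ : ℝ → ℝ} {a b s : ℝ}
    (hf : HasFDerivAt (fun p : ℝ × ℝ => f p.1 p.2) L (γ₁ s, γ₂ s))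
    (h₁ : HasDerivAt γ₁ a s) (h₂ : HasDerivAt γ₂ b s) :
    HasDerivAt (fun r => f (γ₁ r) (γ₂ r)) (a * L (1, 0) + b * L (0, 1)) s := by
  have hL : L (a, b) = a * L (1, 0) + b * L (0, 1) := by
    rw [show ((a, b) : ℝ × ℝ) = a • ((1 : ℝ), (0 : ℝ)) + b • ((0 : ℝ), (1 : ℝ)) by simp,
      map_add, map_smul, map_smul, Complex.real_smul, Complex.real_smul]
  rw [← hL]
  exact hf.comp_hasDerivAt s (h₁.prodMk h₂)

theorem HasFDerivAt.pt_eq {L : ℝ × ℝ →L[ℝ] ℂ} {t x : ℝ}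
    (hf : HasFDerivAt (fun p : ℝ × ℝ => f p.1 p.2) L (t, x)) : pt f t x = L (1, 0) := by
  simpa [pt] using (hf.hasDerivAt_comp_prodMk (hasDerivAt_id t) (hasDerivAt_const t x)).deriv

theorem HasFDerivAt.px_eq {L : ℝ × ℝ →L[ℝ] ℂ} {t x : ℝ}
    (hf : HasFDerivAt (fun p : ℝ × ℝ => f p.1 p.2) L (t, x)) : px f t x = L (0, 1) := by
  simpa [px] using (hf.hasDerivAt_comp_prodMk (hasDerivAt_const x t) (hasDerivAt_id x)).deriv

theorem DifferentiableAt.hasDerivAt_comp_prodMk {γ₁ γ₂ : ℝ → ℝ} {a b s : ℝ}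
    (hf : DifferentiableAt ℝ (fun p : ℝ × ℝ => f p.1 p.2) (γ₁ s, γ₂ s))
    (h₁ : HasDerivAt γ₁ a s) (h₂ : HasDerivAt γ₂ b s) :
    HasDerivAt (fun r => f (γ₁ r) (γ₂ r))
      (a * pt f (γ₁ s) (γ₂ s) + b * px f (γ₁ s) (γ₂ s)) s := by
  rw [hf.hasFDerivAt.pt_eq, hf.hasFDerivAt.px_eq]
  exact hf.hasFDerivAt.hasDerivAt_comp_prodMk h₁ h₂

theorem norm_ofReal_sqrt_mul_sq {a : ℝ} (ha : 0 ≤ a) (z : ℂ) :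
    ‖(√a : ℂ) * z‖ ^ 2 = a * ‖z‖ ^ 2 := by
  rw [norm_mul, mul_pow, Complex.norm_real, norm_eq_abs, sq_abs, sq_sqrt ha]

theorem abs_mul_sinh_lt_mul_cosh {ρ : ℝ} (hρ : 0 < ρ) (y : ℝ) : |ρ * sinh y| < ρ * cosh y := by
  rw [abs_mul, abs_of_pos hρ, abs_sinh, ← cosh_abs]
  exact mul_lt_mul_of_pos_left (sinh_lt_cosh _) hρ

theorem sqrt_mul_exp_neg_mul_exp (ρ y : ℝ) : √(ρ * exp (-y)) * exp y = √(ρ * exp y) := by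
  calc √(ρ * exp (-y)) * exp y = √(ρ * exp (-y) * exp y ^ 2) := by
        rw [sqrt_mul' _ (sq_nonneg _), sqrt_sq (exp_pos y).le]
    _ = √(ρ * exp y) := by rw [exp_neg]; field_simp

theorem sqrt_mul_exp_mul_exp_neg (ρ y : ℝ) : √(ρ * exp y) * exp (-y) = √(ρ * exp (-y)) := by
  simpa using sqrt_mul_exp_neg_mul_exp ρ (-y)

variable {ρ y : ℝ}

theorem hasDerivAt_comp_hyperbolic_rho
    (hf : DifferentiableAt ℝ (fun p : ℝ × ℝ => f p.1 p.2) (ρ * cosh y, ρ * sinh y)) :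
    HasDerivAt (fun r => f (r * cosh y) (r * sinh y))
      (cosh y * pt f (ρ * cosh y) (ρ * sinh y) + sinh y * px f (ρ * cosh y) (ρ * sinh y)) ρ :=
  hf.hasDerivAt_comp_prodMk (hasDerivAt_mul_const _) (hasDerivAt_mul_const _)

theorem hasDerivAt_comp_hyperbolic_y
    (hf : DifferentiableAt ℝ (fun p : ℝ × ℝ => f p.1 p.2) (ρ * cosh y, ρ * sinh y)) :
    HasDerivAt (fun z => f (ρ * cosh z) (ρ * sinh z))
      ((ρ * sinh y : ℝ) * pt f (ρ * cosh y) (ρ * sinh y)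
        + (ρ * cosh y : ℝ) * px f (ρ * cosh y) (ρ * sinh y)) y :=
  hf.hasDerivAt_comp_prodMk ((hasDerivAt_cosh y).const_mul ρ) ((hasDerivAt_sinh y).const_mul ρ)

theorem pt_add_inv_mul_px_of_eq_sqrt_mul_exp_neg {F : ℝ → ℝ → ℂ}
    (hF : ∀ r z, F r z = (√(r * exp (-z)) : ℂ) * f (r * cosh z) (r * sinh z)) (hρ : 0 < ρ)
    (hf : DifferentiableAt ℝ (fun p : ℝ × ℝ => f p.1 p.2) (ρ * cosh y, ρ * sinh y)) :
    pt F ρ y + (ρ⁻¹ : ℝ) * px F ρ y = (√(ρ * exp y) : ℝ) *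
      (pt f (ρ * cosh y) (ρ * sinh y) + px f (ρ * cosh y) (ρ * sinh y)) := by
  have hw : ρ * exp (-y) ≠ 0 := (mul_pos hρ (exp_pos _)).ne'
  have hwρ := ((hasDerivAt_mul_const (exp (-y))).sqrt hw).ofReal_comp
  have hwy := ((((hasDerivAt_neg y).exp).const_mul ρ).sqrt hw).ofReal_comp
  have hpt : pt F ρ y = _ := ((hwρ.mul (hasDerivAt_comp_hyperbolic_rho hf)).congr_of_eventuallyEq
    (.of_forall fun r => hF r y)).deriv
  have hpx : px F ρ y = _ := ((hwy.mul (hasDerivAt_comp_hyperbolic_y hf)).congr_of_eventuallyEq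
    (.of_forall fun z => hF ρ z)).deriv
  have hρ' : (ρ : ℂ)⁻¹ * ρ = 1 := inv_mul_cancel₀ (by exact_mod_cast hρ.ne')
  have hexp : (cosh y + sinh y : ℂ) = exp y := by exact_mod_cast cosh_add_sinh y
  have hsqrt : (√(ρ * exp (-y)) * exp y : ℂ) = √(ρ * exp y) := by
    exact_mod_cast sqrt_mul_exp_neg_mul_exp ρ y
  rw [hpt, hpx]
  set w := √(ρ * exp (-y))
  set P := pt f (ρ * cosh y) (ρ * sinh y)
  set Q := px f (ρ * cosh y) (ρ * sinh y)
  simp only [Complex.ofReal_mul, Complex.ofReal_div, Complex.ofReal_neg, Complex.ofReal_inv,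
    Complex.ofReal_one, Complex.ofReal_ofNat]
  linear_combination
    (w * (sinh y * P + cosh y * Q) - exp (-y) / (2 * w) * f (ρ * cosh y) (ρ * sinh y)) * hρ'
      + w * (P + Q) * hexp + (P + Q) * hsqrt

theorem pt_sub_inv_mul_px_of_eq_sqrt_mul_exp {F : ℝ → ℝ → ℂ}
    (hF : ∀ r z, F r z = (√(r * exp z) : ℂ) * f (r * cosh z) (r * sinh z)) (hρ : 0 < ρ)
    (hf : DifferentiableAt ℝ (fun p : ℝ × ℝ => f p.1 p.2) (ρ * cosh y, ρ * sinh y)) :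
    pt F ρ y - (ρ⁻¹ : ℝ) * px F ρ y = (√(ρ * exp (-y)) : ℝ) *
      (pt f (ρ * cosh y) (ρ * sinh y) - px f (ρ * cosh y) (ρ * sinh y)) := by
  have hw : ρ * exp y ≠ 0 := (mul_pos hρ (exp_pos _)).ne'
  have hwρ := ((hasDerivAt_mul_const (exp y)).sqrt hw).ofReal_comp
  have hwy := (((hasDerivAt_exp y).const_mul ρ).sqrt hw).ofReal_comp
  have hpt : pt F ρ y = _ := ((hwρ.mul (hasDerivAt_comp_hyperbolic_rho hf)).congr_of_eventuallyEq
    (.of_forall fun r => hF r y)).deriv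
  have hpx : px F ρ y = _ := ((hwy.mul (hasDerivAt_comp_hyperbolic_y hf)).congr_of_eventuallyEq
    (.of_forall fun z => hF ρ z)).deriv
  have hρ' : (ρ : ℂ)⁻¹ * ρ = 1 := inv_mul_cancel₀ (by exact_mod_cast hρ.ne')
  have hexp : (cosh y - sinh y : ℂ) = exp (-y) := by exact_mod_cast cosh_sub_sinh y
  have hsqrt : (√(ρ * exp y) * exp (-y) : ℂ) = √(ρ * exp (-y)) := by
    exact_mod_cast sqrt_mul_exp_mul_exp_neg ρ y
  rw [hpt, hpx]
  set w := √(ρ * exp y)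
  set P := pt f (ρ * cosh y) (ρ * sinh y)
  set Q := px f (ρ * cosh y) (ρ * sinh y)
  simp only [Complex.ofReal_mul, Complex.ofReal_div, Complex.ofReal_inv, Complex.ofReal_ofNat]
  linear_combination
    -(exp y / (2 * w) * f (ρ * cosh y) (ρ * sinh y) + w * (sinh y * P + cosh y * Q)) * hρ'
      + w * (P - Q) * hexp + (P - Q) * hsqrt

end

/-- the Thirring system in hyperbolic coordinates.  If (u,v) is a C¹
solution of the Thirring system on the cone {t > |x|}, and
U(ρ,y) = (ρ e^{-y})^{1/2} u(ρ cosh y, ρ sinh y), V(ρ,y) = (ρ e^{y})^{1/2} v(ρ cosh y, ρ sinh y),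
then ∂_ρ U + ρ⁻¹ ∂_y U = iV + iρ⁻¹|V|²U and ∂_ρ V - ρ⁻¹ ∂_y V = iU + iρ⁻¹|U|²V
for all ρ > 0, y ∈ ℝ. -/
theorem thirring_hyperbolic_coordinates (u v U V : ℝ → ℝ → ℂ)
    (hu : ContDiffOn ℝ 1 (fun p : ℝ × ℝ => u p.1 p.2) {p : ℝ × ℝ | |p.2| < p.1})
    (hv : ContDiffOn ℝ 1 (fun p : ℝ × ℝ => v p.1 p.2) {p : ℝ × ℝ | |p.2| < p.1})
    (hsys : ∀ t x : ℝ, |x| < t →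
      (pt u t x + px u t x = Complex.I * v t x + Complex.I * (‖v t x‖ ^ 2 : ℝ) * u t x) ∧
      (pt v t x - px v t x = Complex.I * u t x + Complex.I * (‖u t x‖ ^ 2 : ℝ) * v t x))
    (hU : ∀ ρ y : ℝ, U ρ y =
      ((Real.sqrt (ρ * Real.exp (-y)) : ℝ) : ℂ) * u (ρ * Real.cosh y) (ρ * Real.sinh y))
    (hV : ∀ ρ y : ℝ, V ρ y =
      ((Real.sqrt (ρ * Real.exp y) : ℝ) : ℂ) * v (ρ * Real.cosh y) (ρ * Real.sinh y)) :
    ∀ ρ y : ℝ, 0 < ρ →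
      (pt U ρ y + ((ρ⁻¹ : ℝ) : ℂ) * px U ρ y =
        Complex.I * V ρ y + Complex.I * ((ρ⁻¹ : ℝ) : ℂ) * (‖V ρ y‖ ^ 2 : ℝ) * U ρ y) ∧
      (pt V ρ y - ((ρ⁻¹ : ℝ) : ℂ) * px V ρ y =
        Complex.I * U ρ y + Complex.I * ((ρ⁻¹ : ℝ) : ℂ) * (‖U ρ y‖ ^ 2 : ℝ) * V ρ y) := by
  intro ρ y hρ
  have hcone := abs_mul_sinh_lt_mul_cosh hρ y
  have hcone_nhds : {p : ℝ × ℝ | |p.2| < p.1} ∈ nhds (ρ * Real.cosh y, ρ * Real.sinh y) :=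
    (isOpen_lt continuous_snd.abs continuous_fst).mem_nhds hcone
  obtain ⟨hu_eq, hv_eq⟩ := hsys _ _ hcone
  have hU' := pt_add_inv_mul_px_of_eq_sqrt_mul_exp_neg hU hρ
    ((hu.contDiffAt hcone_nhds).differentiableAt one_ne_zero)
  have hV' := pt_sub_inv_mul_px_of_eq_sqrt_mul_exp hV hρ
    ((hv.contDiffAt hcone_nhds).differentiableAt one_ne_zero)
  have hρ' : (ρ : ℂ)⁻¹ * ρ = 1 := inv_mul_cancel₀ (by exact_mod_cast hρ.ne')
  have hsqrt_mul_exp :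
      (Real.sqrt (ρ * Real.exp (-y)) * Real.exp y : ℂ) = Real.sqrt (ρ * Real.exp y) := by
    exact_mod_cast sqrt_mul_exp_neg_mul_exp ρ y
  have hsqrt_mul_exp_neg :
      (Real.sqrt (ρ * Real.exp y) * Real.exp (-y) : ℂ) = Real.sqrt (ρ * Real.exp (-y)) := by
    exact_mod_cast sqrt_mul_exp_mul_exp_neg ρ y
  rw [hU', hV', hu_eq, hv_eq, hU, hV, norm_ofReal_sqrt_mul_sq (by positivity),
    norm_ofReal_sqrt_mul_sq (by positivity)]
  simp only [Complex.ofReal_mul, Complex.ofReal_inv, Complex.ofReal_pow]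
  set u₀ := u (ρ * Real.cosh y) (ρ * Real.sinh y)
  set v₀ := v (ρ * Real.cosh y) (ρ * Real.sinh y)
  constructor
  · linear_combination (-Complex.I * ‖v₀‖ ^ 2 * u₀) * hsqrt_mul_exp
      - Complex.I * ‖v₀‖ ^ 2 * u₀ * Real.exp y * Real.sqrt (ρ * Real.exp (-y)) * hρ'
  · linear_combination (-Complex.I * ‖u₀‖ ^ 2 * v₀) * hsqrt_mul_exp_neg
      - Complex.I * ‖u₀‖ ^ 2 * v₀ * Real.exp (-y) * Real.sqrt (ρ * Real.exp y) * hρ'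
end
end

section
/- (Existence of the asymptotic modulus.) Let λ ∈ ℝ, C₀ > 0 and let φ, S, R : [1,∞) → ℂ with φ, S of class C¹, satisfying ∂_ρ φ = (iλ/ρ)|φ|² φ + ∂_ρ S + R on [1,∞), together with the bounds |φ(ρ)| ≤ C₀, |S(ρ)| ≤ C₀ ρ^{−1/2}, |R(ρ)| ≤ C₀ ρ^{−3/2} for all ρ ≥ 1. Then there exist a ≥ 0 and a constant C₁ (depending only on λ and C₀) such that | |φ(ρ)|² − a | ≤ C₁ ρ^{−1/2} for all ρ ≥ 1; in particular |φ(ρ)|² → a as ρ → ∞. -/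
/-!
Put `ψ = φ - S`, so that `ψ' = (iλ/ρ)|φ|²φ + R`. The cubic term is a phase rotation of `φ`, hence
orthogonal to `φ`; in `(|ψ|²)' = 2⟪ψ, ψ'⟫` it survives only paired with `S`, and every term is
`O(ρ^{-3/2})`. Integrating, `|ψ(t)|² - |ψ(s)|² = O(s^{-1/2})` for `s ≤ t`, so `|ψ|²` converges to
some `a` at that rate, and so does `|φ|²` because `|φ|² - |ψ|² = O(|S|)`.
-/

open Filter Set Complex Topology RealInnerProductSpace

theorem norm_sub_le_of_norm_deriv_le_rpow {E : Type*} [NormedAddCommGroup E] [NormedSpace ℝ E]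
    {f f' : ℝ → E} {a c p : ℝ} (ha : 0 < a) (hp : 0 < p)
    (hf : ∀ x ∈ Ici a, HasDerivWithinAt f (f' x) (Ici a) x)
    (hf' : ∀ x ∈ Ici a, ‖f' x‖ ≤ c * x ^ (-p - 1)) {s t : ℝ} (hs : a ≤ s) (hst : s ≤ t) :
    ‖f t - f s‖ ≤ c / p * s ^ (-p) := by
  have hc : 0 ≤ c := nonneg_of_mul_nonneg_left ((norm_nonneg _).trans (hf' a self_mem_Ici))
    (Real.rpow_pos_of_pos ha _)
  have hsub : Ici s ⊆ Ici a := Ici_subset_Ici.2 hs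
  have hg : ∀ x ∈ Ici s, HasDerivAt (fun x => c / p * x ^ (-p)) (-(c * x ^ (-p - 1))) x := by
    intro x hx
    refine ((Real.hasDerivAt_rpow_const (p := -p) (Or.inl (ha.trans_le (hsub hx)).ne')).const_mul
      (c / p)).congr_deriv ?_
    field_simp
  have hfence := image_norm_le_of_norm_deriv_right_le_deriv_boundary'
    (f := fun x => f x - f s) (B := fun x => c / p * s ^ (-p) - c / p * x ^ (-p))
    (fun x hx => ((hf x (hsub hx.1)).continuousWithinAt.mono (Icc_subset_Ici_self.trans hsub)).sub
      continuousWithinAt_const)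
    (fun x hx => ((hf x (hsub hx.1)).mono (Ici_subset_Ici.2 (hs.trans hx.1))).sub_const (f s))
    (by simp)
    (fun x hx => ((hg x hx.1).const_sub _).continuousAt.continuousWithinAt)
    (fun x hx => ((hg x hx.1).const_sub _).hasDerivWithinAt)
    (fun x hx => by simpa using hf' x (hsub hx.1)) ⟨hst, le_rfl⟩
  refine hfence.trans (sub_le_self _ ?_)
  exact mul_nonneg (div_nonneg hc hp.le) (Real.rpow_nonneg (ha.le.trans (hs.trans hst)) _)

theorem exists_dist_le_of_dist_le {β α : Type*} [SemilatticeSup β] [Nonempty β]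
    [PseudoMetricSpace α] [CompleteSpace α] {f : β → α} {ε : β → ℝ} {a : β}
    (hε : Tendsto ε atTop (𝓝 0)) (hf : ∀ s t, a ≤ s → s ≤ t → dist (f t) (f s) ≤ ε s) :
    ∃ l, ∀ s, a ≤ s → dist (f s) l ≤ ε s := by
  have hcauchy : CauchySeq f := Metric.cauchySeq_iff'.2 fun δ hδ =>
    (((hε.eventually (gt_mem_nhds hδ)).and (eventually_ge_atTop a)).exists).imp
      fun N hN n hn => (hf N n hN.2 hn).trans_lt hN.1
  obtain ⟨l, hl⟩ := cauchySeq_tendsto_of_complete hcauchy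
  refine ⟨l, fun s hs => le_of_tendsto (tendsto_const_nhds.dist hl) ?_⟩
  filter_upwards [eventually_ge_atTop s] with t hst
  rw [dist_comm]
  exact hf s t hs hst

theorem tendsto_of_eventually_dist_le {β α : Type*} [PseudoMetricSpace α] {l : Filter β}
    {f : β → α} {ε : β → ℝ} {y : α} (hε : Tendsto ε l (𝓝 0))
    (hf : ∀ᶠ x in l, dist (f x) y ≤ ε x) : Tendsto f l (𝓝 y) :=
  tendsto_iff_dist_tendsto_zero.2 (squeeze_zero' (Eventually.of_forall fun _ => dist_nonneg) hf hε)

theorem abs_norm_sq_sub_norm_sub_sq_le {E : Type*} [SeminormedAddCommGroup E] (z w : E) :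
    |‖z‖ ^ 2 - ‖z - w‖ ^ 2| ≤ ‖w‖ * (2 * ‖z‖ + ‖w‖) := by
  have hdiff : |‖z‖ - ‖z - w‖| ≤ ‖w‖ := by
    simpa using abs_norm_sub_norm_le z (z - w)
  have hsum : ‖z‖ + ‖z - w‖ ≤ 2 * ‖z‖ + ‖w‖ := by
    linarith [norm_sub_le z w]
  calc |‖z‖ ^ 2 - ‖z - w‖ ^ 2| = |‖z‖ - ‖z - w‖| * (‖z‖ + ‖z - w‖) := by
        rw [← abs_of_nonneg (by positivity : 0 ≤ ‖z‖ + ‖z - w‖), ← abs_mul]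
        ring_nf
    _ ≤ ‖w‖ * (2 * ‖z‖ + ‖w‖) := mul_le_mul hdiff hsum (by positivity) (norm_nonneg _)

namespace Complex

theorem real_inner_self_I_mul_ofReal_mul (z : ℂ) (r : ℝ) : ⟪z, I * r * z⟫ = 0 := by
  simp only [Complex.inner, mul_re, mul_im, I_re, I_im, ofReal_re, ofReal_im, conj_re, conj_im]
  ring

theorem abs_real_inner_sub_I_mul_add_le (z w v : ℂ) (r : ℝ) :
    |⟪z - w, I * r * z + v⟫| ≤ ‖w‖ * (|r| * ‖z‖) + ‖z - w‖ * ‖v‖ := by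
  have hsplit : ⟪z - w, I * r * z + v⟫ = -⟪w, I * r * z⟫ + ⟪z - w, v⟫ := by
    rw [inner_add_right, inner_sub_left, real_inner_self_I_mul_ofReal_mul, zero_sub]
  have hnorm : ‖I * r * z‖ = |r| * ‖z‖ := by simp
  calc |⟪z - w, I * r * z + v⟫| ≤ |⟪w, I * r * z⟫| + |⟪z - w, v⟫| := by
        rw [hsplit, ← abs_neg ⟪w, _⟫]; exact abs_add_le _ _
    _ ≤ ‖w‖ * (|r| * ‖z‖) + ‖z - w‖ * ‖v‖ := by
        rw [← hnorm]; exact add_le_add (abs_real_inner_le_norm _ _) (abs_real_inner_le_norm _ _)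

end Complex

theorem hasDerivWithinAt_norm_sub_sq {lam ρ : ℝ} {s : Set ℝ} {φ S R : ℝ → ℂ}
    (hφ : DifferentiableWithinAt ℝ φ s ρ) (hS : DifferentiableWithinAt ℝ S s ρ)
    (hode : derivWithin φ s ρ =
      (I * lam / ρ) * ((‖φ ρ‖ ^ 2 : ℝ) : ℂ) * φ ρ + derivWithin S s ρ + R ρ) :
    HasDerivWithinAt (fun x => ‖φ x - S x‖ ^ 2)
      (2 * ⟪φ ρ - S ρ, I * ↑(lam / ρ * ‖φ ρ‖ ^ 2) * φ ρ + R ρ⟫) s ρ := by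
  have hψ : HasDerivWithinAt (fun x => φ x - S x) (I * ↑(lam / ρ * ‖φ ρ‖ ^ 2) * φ ρ + R ρ) s ρ := by
    refine (hφ.hasDerivWithinAt.sub hS.hasDerivWithinAt).congr_deriv ?_
    rw [hode]
    push_cast
    ring
  exact hψ.norm_sq

theorem abs_real_inner_sub_I_mul_add_le_of_decay {lam C₀ ρ : ℝ} {z w v : ℂ} (hρ : 1 ≤ ρ)
    (hz : ‖z‖ ≤ C₀) (hw : ‖w‖ ≤ C₀ * ρ ^ (-(1 : ℝ) / 2)) (hv : ‖v‖ ≤ C₀ * ρ ^ (-(3 : ℝ) / 2)) :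
    |⟪z - w, I * ↑(lam / ρ * ‖z‖ ^ 2) * z + v⟫| ≤
      (|lam| * C₀ ^ 4 + 2 * C₀ ^ 2) * ρ ^ (-(3 : ℝ) / 2) := by
  have hC₀ : 0 ≤ C₀ := (norm_nonneg z).trans hz
  have hρ₀ : 0 < ρ := one_pos.trans_le hρ
  have hhalf : ρ ^ (-(1 : ℝ) / 2) ≤ 1 := Real.rpow_le_one_of_one_le_of_nonpos hρ (by norm_num)
  have hthreehalves : ρ ^ (-(3 : ℝ) / 2) = ρ ^ (-(1 : ℝ) / 2) * ρ⁻¹ := by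
    rw [← Real.rpow_neg_one, ← Real.rpow_add hρ₀]
    norm_num
  have hzw : ‖z - w‖ ≤ 2 * C₀ :=
    (norm_sub_le z w).trans (by nlinarith [Real.rpow_nonneg hρ₀.le (-(1 : ℝ) / 2)])
  have hr : |lam / ρ * ‖z‖ ^ 2| * ‖z‖ ≤ |lam| * C₀ ^ 3 * ρ⁻¹ := by
    rw [abs_mul, abs_div, abs_of_pos hρ₀, abs_of_nonneg (by positivity : 0 ≤ ‖z‖ ^ 2)]
    calc |lam| / ρ * ‖z‖ ^ 2 * ‖z‖ = |lam| * ‖z‖ ^ 3 * ρ⁻¹ := by ring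
      _ ≤ |lam| * C₀ ^ 3 * ρ⁻¹ := by gcongr
  calc _ ≤ ‖w‖ * (|lam / ρ * ‖z‖ ^ 2| * ‖z‖) + ‖z - w‖ * ‖v‖ :=
        Complex.abs_real_inner_sub_I_mul_add_le z w v _
    _ ≤ C₀ * ρ ^ (-(1 : ℝ) / 2) * (|lam| * C₀ ^ 3 * ρ⁻¹) + 2 * C₀ * (C₀ * ρ ^ (-(3 : ℝ) / 2)) := by
        gcongr
    _ = (|lam| * C₀ ^ 4 + 2 * C₀ ^ 2) * ρ ^ (-(3 : ℝ) / 2) := by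
        rw [hthreehalves]; ring

theorem dist_norm_sub_sq_le {lam C₀ : ℝ} {φ S R : ℝ → ℂ}
    (hφ : ContDiffOn ℝ 1 φ (Ici 1)) (hS : ContDiffOn ℝ 1 S (Ici 1))
    (hode : ∀ ρ : ℝ, 1 ≤ ρ → derivWithin φ (Ici 1) ρ =
      (I * lam / ρ) * ((‖φ ρ‖ ^ 2 : ℝ) : ℂ) * φ ρ + derivWithin S (Ici 1) ρ + R ρ)
    (hφb : ∀ ρ : ℝ, 1 ≤ ρ → ‖φ ρ‖ ≤ C₀) (hSb : ∀ ρ : ℝ, 1 ≤ ρ → ‖S ρ‖ ≤ C₀ * ρ ^ (-(1 : ℝ) / 2))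
    (hRb : ∀ ρ : ℝ, 1 ≤ ρ → ‖R ρ‖ ≤ C₀ * ρ ^ (-(3 : ℝ) / 2)) {s t : ℝ} (hs : 1 ≤ s) (hst : s ≤ t) :
    dist (‖φ t - S t‖ ^ 2) (‖φ s - S s‖ ^ 2) ≤
      4 * (|lam| * C₀ ^ 4 + 2 * C₀ ^ 2) * s ^ (-(1 : ℝ) / 2) := by
  have hderiv := fun ρ (hρ : ρ ∈ Ici (1 : ℝ)) => hasDerivWithinAt_norm_sub_sq
    (hφ.differentiableOn one_ne_zero ρ hρ) (hS.differentiableOn one_ne_zero ρ hρ) (hode ρ hρ)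
  have hbound := norm_sub_le_of_norm_deriv_le_rpow (c := 2 * (|lam| * C₀ ^ 4 + 2 * C₀ ^ 2))
    one_pos (by norm_num : (0 : ℝ) < 1 / 2) hderiv (fun ρ hρ => ?_) hs hst
  · rw [Real.dist_eq, ← Real.norm_eq_abs]
    refine hbound.trans_eq ?_
    rw [neg_div]
    ring
  · have hinner := abs_real_inner_sub_I_mul_add_le_of_decay (lam := lam) hρ (hφb ρ hρ) (hSb ρ hρ)
      (hRb ρ hρ)
    rw [show -(1 / 2 : ℝ) - 1 = -(3 : ℝ) / 2 by norm_num, Real.norm_eq_abs, abs_mul, abs_two]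
    linarith

theorem asymptotic_modulus_exists_general (lam C₀ : ℝ) :
    ∃ C₁ : ℝ, ∀ φ S R : ℝ → ℂ,
      ContDiffOn ℝ 1 φ (Set.Ici 1) → ContDiffOn ℝ 1 S (Set.Ici 1) →
      (∀ ρ : ℝ, 1 ≤ ρ →
        derivWithin φ (Set.Ici 1) ρ =
          (Complex.I * (lam : ℂ) / (ρ : ℂ)) * ((‖φ ρ‖ ^ 2 : ℝ) : ℂ) * φ ρ +
            derivWithin S (Set.Ici 1) ρ + R ρ) →
      (∀ ρ : ℝ, 1 ≤ ρ → ‖φ ρ‖ ≤ C₀) →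
      (∀ ρ : ℝ, 1 ≤ ρ → ‖S ρ‖ ≤ C₀ * ρ ^ (-(1 : ℝ) / 2)) →
      (∀ ρ : ℝ, 1 ≤ ρ → ‖R ρ‖ ≤ C₀ * ρ ^ (-(3 : ℝ) / 2)) →
      ∃ a : ℝ, 0 ≤ a ∧
        (∀ ρ : ℝ, 1 ≤ ρ → |‖φ ρ‖ ^ 2 - a| ≤ C₁ * ρ ^ (-(1 : ℝ) / 2)) ∧
        Filter.Tendsto (fun ρ => ‖φ ρ‖ ^ 2) Filter.atTop (nhds a) := by
  set K := 4 * (|lam| * C₀ ^ 4 + 2 * C₀ ^ 2)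
  have hdecay (c : ℝ) : Tendsto (fun x : ℝ => c * x ^ (-(1 : ℝ) / 2)) atTop (𝓝 0) := by
    simpa [neg_div] using (tendsto_rpow_neg_atTop (by norm_num : (0 : ℝ) < 1 / 2)).const_mul c
  refine ⟨K + 3 * C₀ ^ 2, fun φ S R hφ hS hode hφb hSb hRb => ?_⟩
  obtain ⟨a, ha⟩ := exists_dist_le_of_dist_le (hdecay K)
    fun s t hs hst => dist_norm_sub_sq_le hφ hS hode hφb hSb hRb hs hst
  have hbound (ρ : ℝ) (hρ : 1 ≤ ρ) : |‖φ ρ‖ ^ 2 - a| ≤ (K + 3 * C₀ ^ 2) * ρ ^ (-(1 : ℝ) / 2) := by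
    have hC₀ : 0 ≤ C₀ := (norm_nonneg _).trans (hφb ρ hρ)
    have hhalf : ρ ^ (-(1 : ℝ) / 2) ≤ 1 := Real.rpow_le_one_of_one_le_of_nonpos hρ (by norm_num)
    have hgauge : |‖φ ρ‖ ^ 2 - ‖φ ρ - S ρ‖ ^ 2| ≤ C₀ * ρ ^ (-(1 : ℝ) / 2) * (3 * C₀) :=
      (abs_norm_sq_sub_norm_sub_sq_le _ _).trans (by gcongr <;> nlinarith [hSb ρ hρ, hφb ρ hρ])
    calc |‖φ ρ‖ ^ 2 - a| ≤ |‖φ ρ‖ ^ 2 - ‖φ ρ - S ρ‖ ^ 2| + dist (‖φ ρ - S ρ‖ ^ 2) a :=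
          abs_sub_le _ _ _
      _ ≤ C₀ * ρ ^ (-(1 : ℝ) / 2) * (3 * C₀) + K * ρ ^ (-(1 : ℝ) / 2) := add_le_add hgauge (ha ρ hρ)
      _ = (K + 3 * C₀ ^ 2) * ρ ^ (-(1 : ℝ) / 2) := by ring
  have hlim : Tendsto (fun ρ => ‖φ ρ‖ ^ 2) atTop (𝓝 a) :=
    tendsto_of_eventually_dist_le (hdecay _) ((eventually_ge_atTop 1).mono hbound)
  exact ⟨a, ge_of_tendsto' hlim fun _ => by positivity, hbound, hlim⟩

/-- existence of the asymptotic modulus.  If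
∂_ρ φ = (iλ/ρ)|φ|²φ + ∂_ρ S + R on [1,∞) with |φ| ≤ C₀, |S| ≤ C₀ ρ^{-1/2},
|R| ≤ C₀ ρ^{-3/2}, then there is a ≥ 0 with ||φ(ρ)|² - a| ≤ C₁ ρ^{-1/2};
in particular |φ(ρ)|² → a as ρ → ∞. -/
theorem asymptotic_modulus_exists (lam C₀ : ℝ) (hC₀ : 0 < C₀) :
    ∃ C₁ : ℝ, ∀ φ S R : ℝ → ℂ,
      ContDiffOn ℝ 1 φ (Set.Ici 1) → ContDiffOn ℝ 1 S (Set.Ici 1) →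
      (∀ ρ : ℝ, 1 ≤ ρ →
        derivWithin φ (Set.Ici 1) ρ =
          (Complex.I * (lam : ℂ) / (ρ : ℂ)) * ((‖φ ρ‖ ^ 2 : ℝ) : ℂ) * φ ρ +
            derivWithin S (Set.Ici 1) ρ + R ρ) →
      (∀ ρ : ℝ, 1 ≤ ρ → ‖φ ρ‖ ≤ C₀) →
      (∀ ρ : ℝ, 1 ≤ ρ → ‖S ρ‖ ≤ C₀ * ρ ^ (-(1 : ℝ) / 2)) →
      (∀ ρ : ℝ, 1 ≤ ρ → ‖R ρ‖ ≤ C₀ * ρ ^ (-(3 : ℝ) / 2)) →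
      ∃ a : ℝ, 0 ≤ a ∧
        (∀ ρ : ℝ, 1 ≤ ρ → |‖φ ρ‖ ^ 2 - a| ≤ C₁ * ρ ^ (-(1 : ℝ) / 2)) ∧
        Filter.Tendsto (fun ρ => ‖φ ρ‖ ^ 2) Filter.atTop (nhds a) :=
  asymptotic_modulus_exists_general lam C₀
end

section
/- (Modified scattering ODE lemma.) Let λ ∈ ℝ, C₀ > 0, a ≥ 0, and let φ, S, R : [1,∞) → ℂ with φ, S of class C¹, satisfying ∂_ρ φ = (iλ/ρ)|φ|² φ + ∂_ρ S + R on [1,∞) together with the bounds |φ(ρ)| ≤ C₀, |S(ρ)| ≤ C₀ ρ^{−1/2}, |R(ρ)| ≤ C₀ ρ^{−3/2}, and | |φ(ρ)|² − a | ≤ C₀ ρ^{−1/2} for all ρ ≥ 1. Then the limit σ := lim_{ρ→∞} e^{−iλ a ln ρ} φ(ρ) exists in ℂ, satisfies |σ|² = a, and there is a constant C₁ (depending only on λ, a and C₀) such that | φ(ρ) − e^{iλ a ln ρ} σ | ≤ C₁ ρ^{−1/2} for all ρ ≥ 1. -/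
/-! The phase `e^{-iλa ln ρ}` removes the resonant part of the equation: since `|φ|² - a` and `S`
decay like `ρ^{-1/2}`, the function `F = e^{-iλa ln ρ} (φ - S)` has
`F' = e^{-iλa ln ρ} ((iλ/ρ)(|φ|² - a) φ + (iλa/ρ) S + R) = O(ρ^{-3/2})`. Integrating this from `ρ`
to `∞` shows that `F` converges to some `σ` at rate `ρ^{-1/2}`, hence so does `e^{-iλa ln ρ} φ`,
and `|σ|² = lim |φ|² = a`. -/

open Complex Filter Set Topology

section DecayingDerivative

variable {E : Type*} [NormedAddCommGroup E] {f : ℝ → E} {σ : E} {t₀ C s : ℝ}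

theorem tendsto_of_norm_sub_le_rpow (hs : 0 < s) (h : ∀ t, t₀ ≤ t → ‖f t - σ‖ ≤ C * t ^ (-s)) :
    Tendsto f atTop (𝓝 σ) := by
  rw [tendsto_iff_norm_sub_tendsto_zero]
  refine squeeze_zero_norm' ?_ (by simpa using (tendsto_rpow_neg_atTop hs).const_mul C)
  filter_upwards [eventually_ge_atTop t₀] with t ht
  simpa using h t ht

variable [NormedSpace ℝ E] {f' : ℝ → E}

theorem norm_sub_le_of_norm_deriv_le_rpow_s19 (ht₀ : 0 < t₀) (hs : s ≠ 0)
    (hf : ∀ t, t₀ ≤ t → HasDerivWithinAt f (f' t) (Ici t₀) t)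
    (hf' : ∀ t, t₀ ≤ t → ‖f' t‖ ≤ C * t ^ (-s - 1)) {r u : ℝ} (hr : t₀ ≤ r) (hru : r ≤ u) :
    ‖f u - f r‖ ≤ C / s * (r ^ (-s) - u ^ (-s)) := by
  have hpos : ∀ t ∈ Icc r u, 0 < t := fun t ht => ht₀.trans_le (hr.trans ht.1)
  have hsub : ∀ t ∈ Icc r u, Ici t ⊆ Ici t₀ := fun t ht => Ici_subset_Ici.2 (hr.trans ht.1)
  refine image_norm_le_of_norm_deriv_right_le_deriv_boundary' (f := fun t => f t - f r)
    (B := fun t => C / s * (r ^ (-s) - t ^ (-s))) (B' := fun t => C * t ^ (-s - 1)) ?_ ?_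
    (by simp) ?_ ?_ (fun t ht => hf' t (hr.trans ht.1)) (right_mem_Icc.2 hru)
  · exact fun t ht => ((hf t (hr.trans ht.1)).continuousWithinAt.mono
      fun x hx => hr.trans hx.1).sub continuousWithinAt_const
  · exact fun t ht => ((hf t (hr.trans ht.1)).mono (hsub t (Ico_subset_Icc_self ht))).sub_const _
  · exact continuousOn_const.mul (continuousOn_const.sub
      (continuousOn_id.rpow_const fun t ht => Or.inl (hpos t ht).ne'))
  · intro t ht
    have := ((Real.hasDerivAt_rpow_const (p := -s) (Or.inl (hpos t (Ico_subset_Icc_self ht)).ne')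
      ).const_sub (r ^ (-s))).const_mul (C / s)
    exact this.hasDerivWithinAt.congr_deriv (by field_simp)

theorem exists_norm_sub_le_of_norm_deriv_le_rpow [CompleteSpace E] (ht₀ : 0 < t₀) (hs : 0 < s)
    (hf : ∀ t, t₀ ≤ t → HasDerivWithinAt f (f' t) (Ici t₀) t)
    (hf' : ∀ t, t₀ ≤ t → ‖f' t‖ ≤ C * t ^ (-s - 1)) :
    ∃ σ, ∀ t, t₀ ≤ t → ‖f t - σ‖ ≤ C / s * t ^ (-s) := by
  have hC : 0 ≤ C :=
    nonneg_of_mul_nonneg_left ((norm_nonneg _).trans (hf' t₀ le_rfl)) (Real.rpow_pos_of_pos ht₀ _)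
  have hcauchy : ∀ r u, t₀ ≤ r → r ≤ u → ‖f u - f r‖ ≤ C / s * r ^ (-s) := fun r u hr hru =>
    (norm_sub_le_of_norm_deriv_le_rpow_s19 ht₀ hs.ne' hf hf' hr hru).trans <| by
      have : 0 ≤ C / s * u ^ (-s) :=
        mul_nonneg (div_nonneg hC hs.le) (Real.rpow_nonneg (ht₀.le.trans (hr.trans hru)) _)
      linarith
  have hdecay : Tendsto (fun t => C / s * t ^ (-s)) atTop (𝓝 0) := by
    simpa using (tendsto_rpow_neg_atTop hs).const_mul (C / s)
  have hcauchySeq : CauchySeq f := Metric.cauchySeq_iff'.2 fun ε hε =>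
    ((hdecay.eventually (gt_mem_nhds hε)).and (eventually_ge_atTop t₀)).exists.imp
      fun N ⟨hN, hN₀⟩ u hu => (dist_eq_norm _ _).trans_lt ((hcauchy N u hN₀ hu).trans_lt hN)
  obtain ⟨σ, hσ⟩ := cauchySeq_tendsto_of_complete hcauchySeq
  refine ⟨σ, fun t ht => le_of_tendsto ((tendsto_const_nhds.sub hσ).norm) ?_⟩
  filter_upwards [eventually_ge_atTop t] with u hu
  rw [norm_sub_rev]
  exact hcauchy t u ht hu

end DecayingDerivative

theorem hasDerivAt_cexp_mul_log (c : ℂ) {t : ℝ} (ht : 0 < t) :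
    HasDerivAt (fun t : ℝ => exp (c * Real.log t)) (c / t * exp (c * Real.log t)) t := by
  have := (((Real.hasDerivAt_log ht.ne').ofReal_comp).const_mul c).cexp
  refine this.congr_deriv ?_
  push_cast
  ring

theorem hasDerivWithinAt_cexp_mul_log_mul_sub (lam a m : ℝ) {φ S : ℝ → ℂ} {φ' S' r : ℂ}
    {s : Set ℝ} {ρ : ℝ} (hρ : 0 < ρ) (hφ : HasDerivWithinAt φ φ' s ρ)
    (hS : HasDerivWithinAt S S' s ρ) (hφ' : φ' = I * lam / ρ * m * φ ρ + S' + r) :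
    HasDerivWithinAt (fun t => exp (-I * lam * a * Real.log t) * (φ t - S t))
      (exp (-I * lam * a * Real.log ρ) *
        (I * lam / ρ * (m - a : ℝ) * φ ρ + I * lam * a / ρ * S ρ + r)) s ρ := by
  refine ((hasDerivAt_cexp_mul_log _ hρ).hasDerivWithinAt.mul (hφ.sub hS)).congr_deriv ?_
  rw [hφ', Pi.sub_apply]
  push_cast
  ring

theorem norm_resonant_remainder_le {lam a m C₀ ρ s : ℝ} {z w r : ℂ} (hρ : 0 < ρ)
    (hz : ‖z‖ ≤ C₀) (hm : |m - a| ≤ C₀ * ρ ^ (-s)) (hw : ‖w‖ ≤ C₀ * ρ ^ (-s))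
    (hr : ‖r‖ ≤ C₀ * ρ ^ (-s - 1)) :
    ‖I * lam / ρ * (m - a : ℝ) * z + I * lam * a / ρ * w + r‖ ≤
      (|lam| * C₀ * C₀ + |lam| * |a| * C₀ + C₀) * ρ ^ (-s - 1) := by
  have hC₀ : 0 ≤ C₀ := (norm_nonneg z).trans hz
  have hρs : ρ ^ (-s - 1) = ρ⁻¹ * ρ ^ (-s) := by
    rw [Real.rpow_sub hρ, Real.rpow_one, div_eq_inv_mul]
  have hnorm : ∀ x : ℝ, ‖I * x / ρ‖ = |x| * ρ⁻¹ := fun x => by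
    simp [abs_of_pos hρ, div_eq_mul_inv]
  calc ‖I * lam / ρ * (m - a : ℝ) * z + I * lam * a / ρ * w + r‖
      ≤ |lam| * ρ⁻¹ * |m - a| * ‖z‖ + |lam| * |a| * ρ⁻¹ * ‖w‖ + ‖r‖ := by
        refine (norm_add₃_le ..).trans ?_
        rw [norm_mul, norm_mul, norm_mul, hnorm, Complex.norm_real, Real.norm_eq_abs,
          show I * lam * a / ρ = I * (lam * a : ℝ) / ρ by push_cast; ring, hnorm, abs_mul]
    _ ≤ |lam| * ρ⁻¹ * (C₀ * ρ ^ (-s)) * C₀ + |lam| * |a| * ρ⁻¹ * (C₀ * ρ ^ (-s)) +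
          C₀ * ρ ^ (-s - 1) := by gcongr
    _ = (|lam| * C₀ * C₀ + |lam| * |a| * C₀ + C₀) * ρ ^ (-s - 1) := by rw [hρs]; ring

theorem norm_sub_cexp_mul (w z σ : ℂ) : ‖z - exp w * σ‖ = ‖exp w‖ * ‖exp (-w) * z - σ‖ := by
  rw [← norm_mul, mul_sub, ← mul_assoc, ← exp_add, add_neg_cancel, exp_zero, one_mul]

theorem modified_scattering_ode_general (lam C₀ a : ℝ) :
    ∃ C₁ : ℝ, ∀ φ S R : ℝ → ℂ,
      ContDiffOn ℝ 1 φ (Set.Ici 1) → ContDiffOn ℝ 1 S (Set.Ici 1) →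
      (∀ ρ : ℝ, 1 ≤ ρ →
        derivWithin φ (Set.Ici 1) ρ =
          (Complex.I * (lam : ℂ) / (ρ : ℂ)) * ((‖φ ρ‖ ^ 2 : ℝ) : ℂ) * φ ρ +
            derivWithin S (Set.Ici 1) ρ + R ρ) →
      (∀ ρ : ℝ, 1 ≤ ρ → ‖φ ρ‖ ≤ C₀) →
      (∀ ρ : ℝ, 1 ≤ ρ → ‖S ρ‖ ≤ C₀ * ρ ^ (-(1 : ℝ) / 2)) →
      (∀ ρ : ℝ, 1 ≤ ρ → ‖R ρ‖ ≤ C₀ * ρ ^ (-(3 : ℝ) / 2)) →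
      (∀ ρ : ℝ, 1 ≤ ρ → |‖φ ρ‖ ^ 2 - a| ≤ C₀ * ρ ^ (-(1 : ℝ) / 2)) →
      ∃ σ : ℂ,
        Filter.Tendsto
          (fun ρ : ℝ => Complex.exp (-Complex.I * (lam : ℂ) * (a : ℂ) * (Real.log ρ : ℂ)) * φ ρ)
          Filter.atTop (nhds σ) ∧
        ‖σ‖ ^ 2 = a ∧
        ∀ ρ : ℝ, 1 ≤ ρ →
          ‖φ ρ - Complex.exp (Complex.I * (lam : ℂ) * (a : ℂ) * (Real.log ρ : ℂ)) * σ‖ ≤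
            C₁ * ρ ^ (-(1 : ℝ) / 2) := by
  set K := |lam| * C₀ * C₀ + |lam| * |a| * C₀ + C₀
  refine ⟨K / (1 / 2) + C₀, fun φ S R hφ hS hode hφb hSb hRb hab => ?_⟩
  rw [neg_div] at hSb hab ⊢
  rw [show -(3 : ℝ) / 2 = -(1 / 2) - 1 by norm_num] at hRb
  have hpos : ∀ ρ : ℝ, 1 ≤ ρ → 0 < ρ := fun ρ hρ => one_pos.trans_le hρ
  have hunit : ∀ ρ : ℝ, ‖exp (-I * lam * a * Real.log ρ)‖ = 1 := fun ρ => by simp [norm_exp]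
  obtain ⟨σ, hσ⟩ := exists_norm_sub_le_of_norm_deriv_le_rpow one_pos one_half_pos
    (fun ρ hρ => hasDerivWithinAt_cexp_mul_log_mul_sub lam a _ (hpos ρ hρ)
      (hφ.differentiableOn one_ne_zero ρ hρ).hasDerivWithinAt
      (hS.differentiableOn one_ne_zero ρ hρ).hasDerivWithinAt (hode ρ hρ))
    (fun ρ hρ => by
      rw [norm_mul, hunit, one_mul]
      exact norm_resonant_remainder_le (hpos ρ hρ) (hφb ρ hρ) (hab ρ hρ) (hSb ρ hρ) (hRb ρ hρ))
  have hbound : ∀ ρ : ℝ, 1 ≤ ρ →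
      ‖exp (-I * lam * a * Real.log ρ) * φ ρ - σ‖ ≤ (K / (1 / 2) + C₀) * ρ ^ (-(1 / 2 : ℝ)) :=
    fun ρ hρ => calc
      _ = ‖(exp (-I * lam * a * Real.log ρ) * (φ ρ - S ρ) - σ) +
            exp (-I * lam * a * Real.log ρ) * S ρ‖ := by congr 1; ring
      _ ≤ K / (1 / 2) * ρ ^ (-(1 / 2 : ℝ)) + C₀ * ρ ^ (-(1 / 2 : ℝ)) :=
        (norm_add_le _ _).trans <| add_le_add (hσ ρ hρ) <| by
          rw [norm_mul, hunit, one_mul]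
          exact hSb ρ hρ
      _ = _ := by ring
  have hlim := tendsto_of_norm_sub_le_rpow one_half_pos hbound
  refine ⟨σ, hlim, tendsto_nhds_unique ((hlim.norm.pow 2).congr fun ρ => ?_)
    (tendsto_of_norm_sub_le_rpow one_half_pos (f := fun ρ => ‖φ ρ‖ ^ 2) hab), fun ρ hρ => ?_⟩
  · rw [norm_mul, hunit, one_mul]
  · rw [norm_sub_cexp_mul, show ‖exp (I * lam * a * Real.log ρ)‖ = 1 by simp [norm_exp], one_mul]
    simpa only [← neg_mul] using hbound ρ hρ

/-- modified scattering ODE lemma.  If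
∂_ρ φ = (iλ/ρ)|φ|²φ + ∂_ρ S + R on [1,∞) with |φ| ≤ C₀, |S| ≤ C₀ ρ^{-1/2},
|R| ≤ C₀ ρ^{-3/2}, and ||φ(ρ)|² - a| ≤ C₀ ρ^{-1/2}, then
σ = lim_{ρ→∞} e^{-iλa ln ρ} φ(ρ) exists, |σ|² = a, and
|φ(ρ) - e^{iλa ln ρ} σ| ≤ C₁ ρ^{-1/2}. -/
theorem modified_scattering_ode (lam C₀ a : ℝ) (hC₀ : 0 < C₀) (ha : 0 ≤ a) :
    ∃ C₁ : ℝ, ∀ φ S R : ℝ → ℂ,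
      ContDiffOn ℝ 1 φ (Set.Ici 1) → ContDiffOn ℝ 1 S (Set.Ici 1) →
      (∀ ρ : ℝ, 1 ≤ ρ →
        derivWithin φ (Set.Ici 1) ρ =
          (Complex.I * (lam : ℂ) / (ρ : ℂ)) * ((‖φ ρ‖ ^ 2 : ℝ) : ℂ) * φ ρ +
            derivWithin S (Set.Ici 1) ρ + R ρ) →
      (∀ ρ : ℝ, 1 ≤ ρ → ‖φ ρ‖ ≤ C₀) →
      (∀ ρ : ℝ, 1 ≤ ρ → ‖S ρ‖ ≤ C₀ * ρ ^ (-(1 : ℝ) / 2)) →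
      (∀ ρ : ℝ, 1 ≤ ρ → ‖R ρ‖ ≤ C₀ * ρ ^ (-(3 : ℝ) / 2)) →
      (∀ ρ : ℝ, 1 ≤ ρ → |‖φ ρ‖ ^ 2 - a| ≤ C₀ * ρ ^ (-(1 : ℝ) / 2)) →
      ∃ σ : ℂ,
        Filter.Tendsto
          (fun ρ : ℝ => Complex.exp (-Complex.I * (lam : ℂ) * (a : ℂ) * (Real.log ρ : ℂ)) * φ ρ)
          Filter.atTop (nhds σ) ∧
        ‖σ‖ ^ 2 = a ∧
        ∀ ρ : ℝ, 1 ≤ ρ →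
          ‖φ ρ - Complex.exp (Complex.I * (lam : ℂ) * (a : ℂ) * (Real.log ρ : ℂ)) * σ‖ ≤
            C₁ * ρ ^ (-(1 : ℝ) / 2) :=
  modified_scattering_ode_general lam C₀ a
end
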